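/- arXiv:1501.04344 — 2 statements merged into one kernel-verified Lean document; each statement's English description precedes it below -/
import Mathlib

section
/- For every n > 3, the set F(n,0) of maps Z₂ⁿ → Z₂ⁿ defined by reversible circuits with n wires is exactly the set of even permutations of Z₂ⁿ; equivalently, the subgroup of the symmetric group on Z₂ⁿ generated by the gates of Ω²_n is the alternating group A(Z₂ⁿ). -/
/-- Boolean vectors of length `n` over `Z₂`. -/
abbrev Bvec (n : ℕ) := Fin n → ZMod 2

/-- A reversible gate on `n` wires: NOT, CNOT (control `i`, target `j`),
or 2-CNOT (unordered pair of controls `c`, target `j`). -/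
inductive RGate (n : ℕ) : Type
  | NOT (j : Fin n) : RGate n
  | CNOT (i j : Fin n) (h : i ≠ j) : RGate n
  | TOF (c : Sym2 (Fin n)) (j : Fin n) (hc : ¬ c.IsDiag) (hj : j ∉ c) : RGate n

/-- The transformation of `Z₂ⁿ` computed by a gate. -/
def RGate.apply {n : ℕ} : RGate n → Bvec n → Bvec n
  | RGate.NOT j, x => Function.update x j (x j + 1)
  | RGate.CNOT i j _, x => Function.update x j (x j + x i)
  | RGate.TOF c j _ _, x =>
      Function.update x j (x j + Sym2.lift ⟨fun a b => x a * x b, fun _ _ => mul_comm _ _⟩ c)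

/-- A reversible circuit on `n` wires: a finite list of gates. -/
abbrev Circuit (n : ℕ) := List (RGate n)

/-- The transformation defined by a circuit: the composition of its gates in order. -/
def Circuit.eval {n : ℕ} (S : Circuit n) (x : Bvec n) : Bvec n :=
  S.foldl (fun v g => g.apply v) x

/-- The support of a gate: its target wire together with its control wires. -/
def RGate.support {n : ℕ} : RGate n → Set (Fin n)
  | RGate.NOT j => {j}
  | RGate.CNOT i j _ => {i, j}
  | RGate.TOF c j _ _ => {a | a = j ∨ a ∈ c}

/-- A circuit has depth 1 iff it is nonempty and its gates have pairwise disjoint supports. -/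
def DepthOne {n : ℕ} (S : Circuit n) : Prop :=
  S ≠ [] ∧ S.Pairwise fun g₁ g₂ => Disjoint g₁.support g₂.support

/-- The depth of a circuit: the minimal number of consecutive depth-1 sublists
into which it can be split (the empty circuit has depth 0). -/
noncomputable def Circuit.depth {n : ℕ} (S : Circuit n) : ℕ :=
  sInf {d | ∃ P : List (Circuit n), P.flatten = S ∧ (∀ T ∈ P, DepthOne T) ∧ P.length = d}

/-- Extend an input vector `x ∈ Z₂ⁿ` by `q` zero values. -/
def extendInput (n q : ℕ) (x : Bvec n) : Bvec (n + q) :=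
  fun k => if h : (k : ℕ) < n then x ⟨k, h⟩ else 0

/-- A circuit `S` with `n+q` wires realizes `f : Z₂ⁿ → Z₂ⁿ` using `q` additional inputs. -/
def Realizes (n q : ℕ) (S : Circuit (n + q)) (f : Bvec n → Bvec n) : Prop :=
  ∃ π : Fin n → Fin (n + q), Function.Injective π ∧
    ∀ (x : Bvec n) (i : Fin n), Circuit.eval S (extendInput n q x) (π i) = f x i

/-- `F(n,q)`: the maps `Z₂ⁿ → Z₂ⁿ` realizable by circuits with `n+q` wires. -/
def FSet (n q : ℕ) : Set (Bvec n → Bvec n) :=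
  {f | ∃ S : Circuit (n + q), Realizes n q S f}

/-- `L(f,q)`: minimal complexity of a circuit with `n+q` wires realizing `f`. -/
noncomputable def Lmin (n q : ℕ) (f : Bvec n → Bvec n) : ℕ :=
  sInf {l | ∃ S : Circuit (n + q), Realizes n q S f ∧ S.length = l}

/-- `D(f,q)`: minimal depth of a circuit with `n+q` wires realizing `f`. -/
noncomputable def Dmin (n q : ℕ) (f : Bvec n → Bvec n) : ℕ :=
  sInf {d | ∃ S : Circuit (n + q), Realizes n q S f ∧ Circuit.depth S = d}

/-- The Shannon complexity function `L(n,q)`. -/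
noncomputable def ShannonL (n q : ℕ) : ℕ := sSup (Lmin n q '' FSet n q)

/-- The Shannon depth function `D(n,q)`. -/
noncomputable def ShannonD (n q : ℕ) : ℕ := sSup (Dmin n q '' FSet n q)

/-- A circuit `S` with `n` wires defines `f` (no additional inputs). -/
def Defines {n : ℕ} (S : Circuit n) (f : Bvec n → Bvec n) : Prop :=
  ∀ x, Circuit.eval S x = f x

/-- `F(n,0)`: maps defined by circuits with `n` wires. -/
def FSet0 (n : ℕ) : Set (Bvec n → Bvec n) :=
  {f | ∃ S : Circuit n, Defines S f}

/-- `D(f,0)`: minimal depth of a circuit with `n` wires defining `f`. -/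
noncomputable def Dmin0 (n : ℕ) (f : Bvec n → Bvec n) : ℕ :=
  sInf {d | ∃ S : Circuit n, Defines S f ∧ Circuit.depth S = d}

/-- The Shannon depth function `D(n,0)` for circuits without additional inputs. -/
noncomputable def ShannonD0 (n : ℕ) : ℕ := sSup (Dmin0 n '' FSet0 n)

/-!
Every gate adds to its target wire a function of at most two other wires. For `n ≥ 4` some
wire `m` is idle, and the gate is the commutator of a gate on the target with the NOT on `m`,
hence even.

Conversely, let `G` be the group generated by the gates. Commutators with a borrowed wire
(Barenco et al.) give in `G` the NOT on `j₀` controlled by `n - 2` negated wires, which is the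
double transposition `(0, e_{j₀}) (e_j, e_j + e_{j₀})` of unit vectors. Put `b = (0, e_{j₀})`. Conjugation by
`g ∈ G` preserves the coset `G b` as soon as `g b g⁻¹ ∈ G b`, which holds for NOTs by the double
transpositions and for Toffoli gates since they fix `0` and `e_{j₀}`. Conjugating by NOTs moves
a transposition `(x, x + v)` to `(0, v)`, and conjugating by a Toffoli gate at a suitable point
flips one bit of `v`; so every transposition lies in `G b`, every product of two transpositions
lies in `G`, and `G` contains the alternating group.
-/

open Equiv Function

theorem Subgroup.conj_mul_mem_iff {M : Type*} [Group M] {H : Subgroup M} {b g τ : M}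
    (hg : g ∈ H) (hgb : g * b⁻¹ * g⁻¹ * b ∈ H) : g * τ * g⁻¹ * b ∈ H ↔ τ * b ∈ H := by
  rw [show g * τ * g⁻¹ * b = g * (τ * b) * g⁻¹ * (g * b⁻¹ * g⁻¹ * b) by group,
    mul_mem_cancel_right hgb, mul_mem_cancel_right (inv_mem hg), mul_mem_cancel_left hg]

namespace Equiv.Perm

variable {α : Type*} [DecidableEq α]

theorem conj_mul_swap_mem_iff {H : Subgroup (Perm α)} {x y : α} {g τ : Perm α} (hg : g ∈ H)
    (hgxy : swap (g x) (g y) * swap x y ∈ H) :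
    g * τ * g⁻¹ * swap x y ∈ H ↔ τ * swap x y ∈ H :=
  Subgroup.conj_mul_mem_iff hg (by rwa [swap_inv, ← swap_apply_apply])

theorem alternatingGroup_le_of_swap_mul_swap_mem [Fintype α] {H : Subgroup (Perm α)}
    (h : ∀ a b c d : α, a ≠ b → c ≠ d → swap a b * swap c d ∈ H) :
    alternatingGroup α ≤ H := by
  rw [← closure_three_cycles_eq_alternating, Subgroup.closure_le]
  intro σ hσ
  obtain ⟨a, ha⟩ := Finset.card_pos.mp (hσ.card_support ▸ three_pos : 0 < σ.support.card)
  rw [hσ.eq_swap_mul_swap_iff_mem_support.mpr ha]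
  exact h _ _ _ _ (Ne.symm (mem_support.mp ha))
    (Ne.symm (mem_support.mp (apply_mem_support.mpr ha)))

end Equiv.Perm

theorem ZMod.eq_zero_or_eq_one_of_two (c : ZMod 2) : c = 0 ∨ c = 1 := by
  revert c; decide

theorem Fin.exists_notMem_of_card_lt {n : ℕ} {s : Finset (Fin n)} (h : s.card < n) :
    ∃ m, m ∉ s := by
  simpa using Finset.exists_mem_notMem_of_card_lt_card (t := Finset.univ) (by simpa using h)

theorem Fin.exists_ne_ne_ne {n : ℕ} (hn : 4 ≤ n) (a b c : Fin n) :
    ∃ m, m ≠ a ∧ m ≠ b ∧ m ≠ c := by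
  obtain ⟨m, hm⟩ := Fin.exists_notMem_of_card_lt (s := {a, b, c})
    (Finset.card_le_three.trans_lt (by omega))
  exact ⟨m, by simpa [not_or] using hm⟩

section BooleanVectors

variable {ι : Type*} [DecidableEq ι]

theorem Pi.zmod_two_induction [Finite ι] {Q : (ι → ZMod 2) → Prop} (h0 : Q 0)
    (hstep : ∀ x j, Q x → Q (x + Pi.single j 1)) (x : ι → ZMod 2) : Q x := by
  suffices ∀ w x, Q x → Q (x + w) by simpa using this x 0 h0
  intro w
  induction w using Pi.single_induction with
  | zero => simp
  | add f g hf hg => exact fun x hx => add_assoc x f g ▸ hg _ (hf x hx)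
  | single j c =>
    obtain rfl | rfl := c.eq_zero_or_eq_one_of_two
    · simp
    · exact fun x => hstep x j

theorem update_add_eq_add_single (x : ι → ZMod 2) (j : ι) (c : ZMod 2) :
    update x j (x j + c) = x + Pi.single j c := by
  ext i
  by_cases hi : i = j
  · subst hi; simp
  · simp [hi]

theorem update_add_single_self (x : ι → ZMod 2) (j : ι) (c d : ZMod 2) :
    update (x + Pi.single j c) j d = update x j d := by
  ext i
  by_cases hi : i = j <;> simp [hi]

theorem update_add_single_of_ne {j a : ι} (h : j ≠ a) (x : ι → ZMod 2) (c d : ZMod 2) :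
    update (x + Pi.single a c) j d = update x j d + Pi.single a c := by
  ext i
  by_cases hi : i = j
  · subst hi; simp [h]
  · simp [hi]

theorem DependsOn.apply_add_single {β : Type*} {s : Set ι} {p : (ι → ZMod 2) → β}
    (hp : DependsOn p s) {a : ι} (ha : a ∉ s) (x : ι → ZMod 2) (c : ZMod 2) :
    p (x + Pi.single a c) = p x :=
  hp fun i hi => by simp [show i ≠ a from fun h => ha (h ▸ hi)]

theorem DependsOn.apply_update {β : Type*} {s : Set ι} {p : (ι → ZMod 2) → β}
    (hp : DependsOn p s) {a : ι} (ha : a ∉ s) (x : ι → ZMod 2) (c : ZMod 2) :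
    p (Function.update x a c) = p x :=
  hp fun i hi => update_of_ne (fun h : i = a => ha (h ▸ hi)) c x

/-- The control is read on `update x j 0`: it never sees the target wire `j`, so the map is an
involution for every `g`. -/
def controlledNot (j : ι) (g : (ι → ZMod 2) → ZMod 2) : Perm (ι → ZMod 2) :=
  Involutive.toPerm (fun x => x + Pi.single j (g (update x j 0))) fun x => by
    simp only [update_add_single_self, add_assoc, ← Pi.single_add, CharTwo.add_self_eq_zero,
      Pi.single_zero, add_zero]

theorem controlledNot_apply (j : ι) (g : (ι → ZMod 2) → ZMod 2) (x : ι → ZMod 2) :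
    controlledNot j g x = x + Pi.single j (g (update x j 0)) := rfl

theorem controlledNot_inv (j : ι) (g : (ι → ZMod 2) → ZMod 2) :
    (controlledNot j g)⁻¹ = controlledNot j g :=
  Involutive.toPerm_symm _

theorem controlledNot_mul (j : ι) (g h : (ι → ZMod 2) → ZMod 2) :
    controlledNot j g * controlledNot j h = controlledNot j (g + h) := by
  ext x : 1
  simp only [Perm.mul_apply, controlledNot_apply, update_add_single_self, Pi.add_apply,
    Pi.single_add]
  abel

theorem controlledNot_congr {j : ι} {g h : (ι → ZMod 2) → ZMod 2}
    (hgh : ∀ x, x j = 0 → g x = h x) : controlledNot j g = controlledNot j h := by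
  ext x : 1
  simp [controlledNot_apply, hgh _ (update_self j 0 x)]

/-- Applied right to left, the first two factors add `p * (x a + q)` to wire `j`, the third
restores wire `a`, and the fourth adds `p * x a` to wire `j`. -/
theorem controlledNot_commutator {j a : ι} (hja : j ≠ a) {s t : Set ι}
    {p q : (ι → ZMod 2) → ZMod 2} (hp : DependsOn p s) (has : a ∉ s) (hq : DependsOn q t)
    (hjt : j ∉ t) (hat : a ∉ t) :
    controlledNot j (fun x => p x * x a) * controlledNot a q *
        controlledNot j (fun x => p x * x a) * controlledNot a q =
      controlledNot j (p * q) := by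
  ext x : 1
  have hq' : q (update x a 0) = q (update x j 0) := by
    rw [← hq.apply_update hjt (update x a 0) 0, update_comm hja.symm, hq.apply_update hat]
  simp only [Perm.mul_apply, controlledNot_apply, update_add_single_of_ne hja,
    update_add_single_of_ne hja.symm, update_add_single_self, hp.apply_add_single has,
    hq.apply_add_single hjt, update_of_ne hja.symm, Pi.add_apply, Pi.single_eq_same,
    Pi.single_eq_of_ne hja.symm, add_zero, Pi.mul_apply, ← hq']
  ext i
  simp only [Pi.add_apply, Pi.single_apply]
  split_ifs <;> grind

theorem sign_controlledNot [Fintype ι] {j m : ι} (hjm : j ≠ m) {s : Set ι}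
    {p : (ι → ZMod 2) → ZMod 2} (hp : DependsOn p s) (hms : m ∉ s) :
    Perm.sign (controlledNot j p) = 1 := by
  have h := controlledNot_commutator hjm hp hms (dependsOn_const (1 : ZMod 2))
    (Set.notMem_empty j) (Set.notMem_empty m)
  rw [← Pi.one_def, mul_one] at h
  rw [← h, map_mul, map_mul, map_mul, mul_right_comm _ (Perm.sign (controlledNot m 1)),
    Int.units_mul_self, one_mul, Int.units_mul_self]

theorem swap_eq_controlledNot [Fintype ι] (u : ι → ZMod 2) (j : ι) :
    swap u (u + Pi.single j 1) = controlledNot j (fun x => if x = update u j 0 then 1 else 0) := by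
  ext y : 1
  rw [swap_apply_def, controlledNot_apply]
  by_cases hu : y = u
  · simp [hu]
  by_cases hv : y = u + Pi.single j 1
  · subst hv
    rw [if_neg hu, if_pos rfl, update_add_single_self, if_pos rfl, add_assoc, ← Pi.single_add,
      CharTwo.add_self_eq_zero, Pi.single_zero, add_zero]
  have h : update y j 0 ≠ update u j 0 := fun h => by
    have hoff : ∀ i, i ≠ j → y i = u i := fun i hi => by
      simpa [hi] using congrFun h i
    obtain hj | hj : y j = u j ∨ y j = u j + 1 := by
      generalize y j = a; generalize u j = b; revert a b; decide
    · exact hu (funext fun i => by by_cases hi : i = j <;> simp_all)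
    · exact hv (funext fun i => by by_cases hi : i = j <;> simp_all)
  simp [hu, hv, h]

end BooleanVectors

namespace RGate

variable {n : ℕ}

def target : RGate n → Fin n
  | NOT j => j
  | CNOT _ j _ => j
  | TOF _ j _ _ => j

def control : RGate n → Bvec n → ZMod 2
  | NOT _ => 1
  | CNOT i _ _ => fun x => x i
  | TOF c _ _ _ => fun x => Sym2.lift ⟨fun a b => x a * x b, fun _ _ => mul_comm _ _⟩ c

def controls : RGate n → Set (Fin n)
  | NOT _ => ∅
  | CNOT i _ _ => {i}
  | TOF c _ _ _ => {a | a ∈ c}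

theorem dependsOn_control (g : RGate n) : DependsOn g.control g.controls := by
  cases g with
  | NOT j => exact dependsOn_const 1
  | CNOT i j h => exact fun x y hxy => hxy i rfl
  | TOF c j hc hj =>
    induction c using Sym2.ind with
    | _ a b =>
      intro x y hxy
      simp only [control, Sym2.lift_mk]
      rw [hxy a (Sym2.mem_mk_left a b), hxy b (Sym2.mem_mk_right a b)]

theorem target_notMem_controls (g : RGate n) : g.target ∉ g.controls := by
  cases g with
  | NOT j => exact Set.notMem_empty j
  | CNOT i j h => exact Ne.symm h
  | TOF c j hc hj => exact hj

theorem apply_eq (g : RGate n) : g.apply = controlledNot g.target g.control := by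
  funext x
  rw [controlledNot_apply, g.dependsOn_control.apply_update g.target_notMem_controls,
    ← update_add_eq_add_single]
  cases g <;> rfl

theorem exists_ne_target_notMem_controls (hn : 4 ≤ n) (g : RGate n) :
    ∃ m, m ≠ g.target ∧ m ∉ g.controls := by
  cases g with
  | NOT j =>
    obtain ⟨m, hm, -⟩ := Fin.exists_ne_ne_ne hn j j j
    exact ⟨m, hm, Set.notMem_empty m⟩
  | CNOT i j h =>
    obtain ⟨m, hmj, hmi, -⟩ := Fin.exists_ne_ne_ne hn j i i
    exact ⟨m, hmj, hmi⟩
  | TOF c j hc hj =>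
    induction c using Sym2.ind with
    | _ a b =>
      obtain ⟨m, hmj, hma, hmb⟩ := Fin.exists_ne_ne_ne hn j a b
      exact ⟨m, hmj, by simp [controls, hma, hmb]⟩

end RGate

def gateGroup (n : ℕ) : Subgroup (Perm (Bvec n)) :=
  Subgroup.closure {σ | ∃ g : RGate n, ⇑σ = g.apply}

section GateGroup

variable {n : ℕ}

theorem gateGroup_le_alternatingGroup (hn : 4 ≤ n) :
    gateGroup n ≤ alternatingGroup (Bvec n) := by
  refine (Subgroup.closure_le _).mpr fun σ ⟨g, hg⟩ => ?_
  obtain ⟨m, hm, hmc⟩ := g.exists_ne_target_notMem_controls hn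
  rw [SetLike.mem_coe, Perm.mem_alternatingGroup,
    show σ = controlledNot g.target g.control from DFunLike.coe_injective (hg.trans g.apply_eq)]
  exact sign_controlledNot (Ne.symm hm) g.dependsOn_control hmc

theorem controlledNot_control_mem_gateGroup (g : RGate n) :
    controlledNot g.target g.control ∈ gateGroup n :=
  Subgroup.subset_closure ⟨g, g.apply_eq.symm⟩

theorem controlledNot_one_mem_gateGroup (j : Fin n) : controlledNot j 1 ∈ gateGroup n :=
  controlledNot_control_mem_gateGroup (.NOT j)

theorem controlledNot_eval_mem_gateGroup {i j : Fin n} (h : i ≠ j) :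
    controlledNot j (fun x => x i) ∈ gateGroup n :=
  controlledNot_control_mem_gateGroup (.CNOT i j h)

theorem controlledNot_eval_mul_eval_mem_gateGroup {i k j : Fin n} (hik : i ≠ k) (hij : i ≠ j)
    (hkj : k ≠ j) : controlledNot j (fun x => x i * x k) ∈ gateGroup n :=
  controlledNot_control_mem_gateGroup
    (.TOF s(i, k) j (by simpa using hik) (by simp [hij.symm, hkj.symm]))

theorem controlledNot_prod_add_one_mem_gateGroup {C : Finset (Fin n)} {t : Fin n} (ht : t ∉ C)
    (hC : C.card + 2 ≤ n) : controlledNot t (fun x => ∏ i ∈ C, (x i + 1)) ∈ gateGroup n := by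
  induction C using Finset.induction_on generalizing t with
  | empty => simpa [← Pi.one_def] using controlledNot_one_mem_gateGroup t
  | insert k C hkC ih =>
    rw [Finset.card_insert_of_notMem hkC] at hC
    obtain ⟨a, ha⟩ := Fin.exists_notMem_of_card_lt (s := insert t (insert k C))
      ((Finset.card_insert_le _ _).trans_lt (by rw [Finset.card_insert_of_notMem hkC]; omega))
    simp only [Finset.mem_insert, not_or] at ha ht
    obtain ⟨hat, hak, haC⟩ := ha
    obtain ⟨htk, htC⟩ := ht
    have hflip : controlledNot t (fun x => (x k + 1) * x a) ∈ gateGroup n := by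
      have : controlledNot t (fun x => (x k + 1) * x a) =
          controlledNot t (fun x => x k * x a) * controlledNot t (fun x => x a) := by
        rw [controlledNot_mul]; congr; funext x; simp only [Pi.add_apply]; ring
      rw [this]
      exact mul_mem (controlledNot_eval_mul_eval_mem_gateGroup (Ne.symm hak) (Ne.symm htk) hat)
        (controlledNot_eval_mem_gateGroup hat)
    have hborrow := ih (t := a) haC (by omega)
    have hcomm := controlledNot_commutator (Ne.symm hat) (p := fun x => x k + 1) (s := {k})
      (fun x y hxy => by simp only [hxy k rfl]) hak (q := fun x => ∏ i ∈ C, (x i + 1)) (t := C)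
      (fun x y hxy => Finset.prod_congr rfl fun i hi => by simp only [hxy i hi]) htC haC
    simp_rw [Finset.prod_insert hkC]
    rw [show (fun x : Bvec n => (x k + 1) * ∏ i ∈ C, (x i + 1)) = _ * _ from rfl, ← hcomm]
    exact mul_mem (mul_mem (mul_mem hflip hborrow) hflip) hborrow

theorem prod_compl_pair_add_one {j₀ j : Fin n} (hj : j ≠ j₀) {x : Bvec n} (hx : x j₀ = 0) :
    ∏ i ∈ ({j₀, j}ᶜ : Finset (Fin n)), (x i + 1) =
      (if x = Pi.single j 1 then 1 else 0) + (if x = 0 then 1 else 0) := by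
  by_cases h : ∀ i ∈ ({j₀, j}ᶜ : Finset (Fin n)), x i = 0
  · have hx' : x = Pi.single j (x j) := by
      ext i
      by_cases h₀ : i = j₀
      · simp [h₀, hx, hj.symm]
      by_cases h₁ : i = j
      · simp [h₁]
      · simp [h₁, h i (by simp [h₀, h₁])]
    rw [Finset.prod_eq_one fun i hi => by rw [h i hi, zero_add], hx']
    obtain hxj | hxj := (x j).eq_zero_or_eq_one_of_two <;> simp [hxj, eq_comm (a := (0 : Bvec n))]
  · push Not at h
    obtain ⟨i, hi, hxi⟩ := h
    have hij : i ≠ j := by rintro rfl; simp at hi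
    rw [Finset.prod_eq_zero hi (by rw [(x i).eq_zero_or_eq_one_of_two.resolve_left hxi]; decide),
      if_neg (fun h => hxi (by simp [h, hij])), if_neg (fun h => hxi (by simp [h])), add_zero]

/-- This double transposition is the NOT on `j₀` controlled by the negations of all wires
other than `j₀` and `j`. -/
theorem swap_single_mul_swap_mem_gateGroup (hn : 4 ≤ n) {j j₀ : Fin n} (hj : j ≠ j₀) :
    swap (Pi.single j 1) (Pi.single j 1 + Pi.single j₀ 1) * swap 0 (Pi.single j₀ 1) ∈
      gateGroup n := by
  have hcard : ({j₀, j}ᶜ : Finset (Fin n)).card + 2 ≤ n := by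
    rw [Finset.card_compl, Finset.card_pair hj.symm, Fintype.card_fin]; omega
  convert controlledNot_prod_add_one_mem_gateGroup (t := j₀) (by simp) hcard using 1
  conv_lhs => rw [swap_eq_controlledNot, ← zero_add (Pi.single j₀ 1), swap_eq_controlledNot]
  rw [controlledNot_mul]
  refine controlledNot_congr fun x hx => ?_
  rw [prod_compl_pair_add_one hj hx, update_eq_self_iff.mpr (by simp [hj.symm])]
  simp

theorem controlledNot_eval_mul_eval_single {i k t j : Fin n} (hik : i ≠ k) (c : ZMod 2) :
    controlledNot t (fun x => x i * x k) (Pi.single j c) = Pi.single j c := by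
  suffices update (Pi.single j c : Bvec n) t 0 i * update (Pi.single j c : Bvec n) t 0 k = 0 by
    simp [controlledNot_apply, this]
  by_cases hij : i = j
  · subst hij
    by_cases hkt : k = t <;> simp [update_apply, hik.symm, hkt]
  · by_cases hit : i = t <;> simp [update_apply, Pi.single_apply, hij, hit]

end GateGroup

section BaseCoset

variable {n : ℕ}

theorem swap_controlledNot_one_mul_swap_mem_gateGroup (hn : 4 ≤ n) (j j₀ : Fin n) :
    swap (controlledNot j 1 0) (controlledNot j 1 (Pi.single j₀ 1)) * swap 0 (Pi.single j₀ 1) ∈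
      gateGroup n := by
  simp only [controlledNot_apply, Pi.one_apply, zero_add]
  by_cases h : j = j₀
  · rw [h, ← Pi.single_add, CharTwo.add_self_eq_zero, Pi.single_zero, swap_comm, swap_mul_self]
    exact one_mem _
  · rw [add_comm]
    exact swap_single_mul_swap_mem_gateGroup hn h

theorem swap_add_mul_swap_mem_gateGroup_iff (hn : 4 ≤ n) (j₀ : Fin n) (x v : Bvec n) :
    swap x (x + v) * swap 0 (Pi.single j₀ 1) ∈ gateGroup n ↔
      swap 0 v * swap 0 (Pi.single j₀ 1) ∈ gateGroup n := by
  induction x using Pi.zmod_two_induction with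
  | h0 => rw [zero_add]
  | hstep x j ih =>
    rw [← ih, ← Perm.conj_mul_swap_mem_iff (τ := swap x (x + v))
      (controlledNot_one_mem_gateGroup j) (swap_controlledNot_one_mul_swap_mem_gateGroup hn j j₀),
      ← swap_apply_apply]
    simp [controlledNot_apply, add_right_comm]

theorem swap_zero_mul_swap_mem_gateGroup_iff_add_single (hn : 4 ≤ n) {j₀ i t : Fin n}
    {v : Bvec n} (hvi : v i = 1) (hit : i ≠ t) :
    swap 0 v * swap 0 (Pi.single j₀ 1) ∈ gateGroup n ↔
      swap 0 (v + Pi.single t 1) * swap 0 (Pi.single j₀ 1) ∈ gateGroup n := by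
  obtain ⟨k, hki, hkt, -⟩ := Fin.exists_ne_ne_ne hn i t t
  set T : Perm (Bvec n) := controlledNot t (fun x => x i * x k)
  have hfix : swap (T 0) (T (Pi.single j₀ 1)) * swap 0 (Pi.single j₀ 1) ∈ gateGroup n := by
    rw [← Pi.single_zero j₀, controlledNot_eval_mul_eval_single hki.symm,
      controlledNot_eval_mul_eval_single hki.symm, Pi.single_zero, swap_mul_self]
    exact one_mem _
  set x₀ : Bvec n := Pi.single k (1 + v k)
  have hTx₀ : T x₀ = x₀ := controlledNot_eval_mul_eval_single hki.symm _
  have hTv : T (x₀ + v) = x₀ + (v + Pi.single t 1) := by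
    rw [controlledNot_apply, add_assoc]
    congr 2
    simp only [update_of_ne hit, update_of_ne hkt, Pi.add_apply, x₀, Pi.single_eq_same,
      Pi.single_eq_of_ne hki.symm, hvi, zero_add, one_mul]
    grind
  rw [← swap_add_mul_swap_mem_gateGroup_iff hn j₀ x₀,
    ← swap_add_mul_swap_mem_gateGroup_iff hn j₀ x₀,
    ← Perm.conj_mul_swap_mem_iff (controlledNot_eval_mul_eval_mem_gateGroup hki.symm hit hkt) hfix,
    ← swap_apply_apply, hTx₀, hTv]

theorem swap_zero_mul_swap_mem_gateGroup (hn : 4 ≤ n) (j₀ : Fin n) {v : Bvec n} (hv : v ≠ 0) :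
    swap 0 v * swap 0 (Pi.single j₀ 1) ∈ gateGroup n := by
  have hbit : ∀ w : Bvec n,
      swap 0 (Pi.single j₀ 1 + update w j₀ 0) * swap 0 (Pi.single j₀ 1) ∈ gateGroup n := by
    intro w
    induction w using Pi.zmod_two_induction with
    | h0 => simp [one_mem]
    | hstep w t ih =>
      by_cases ht : t = j₀
      · rwa [ht, update_add_single_self]
      · rwa [update_add_single_of_ne (Ne.symm ht), ← add_assoc,
          ← swap_zero_mul_swap_mem_gateGroup_iff_add_single hn (i := j₀) (by simp) (Ne.symm ht)]
  obtain hv₀ | hv₀ := (v j₀).eq_zero_or_eq_one_of_two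
  · obtain ⟨i, hi⟩ := Function.ne_iff.mp hv
    have hi : v i = 1 := (v i).eq_zero_or_eq_one_of_two.resolve_left hi
    rw [swap_zero_mul_swap_mem_gateGroup_iff_add_single hn hi (t := j₀)
      (by rintro rfl; simp [hv₀] at hi)]
    convert hbit v using 3
    ext i; by_cases hi : i = j₀ <;> simp [hi, hv₀]
  · convert hbit v using 3
    ext i; by_cases hi : i = j₀ <;> simp [hi, hv₀]

theorem swap_mul_swap_mem_gateGroup (hn : 4 ≤ n) (j₀ : Fin n) {x y : Bvec n} (hxy : x ≠ y) :
    swap x y * swap 0 (Pi.single j₀ 1) ∈ gateGroup n := by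
  simpa using (swap_add_mul_swap_mem_gateGroup_iff hn j₀ x (y - x)).mpr
    (swap_zero_mul_swap_mem_gateGroup hn j₀ (sub_ne_zero.mpr hxy.symm))

theorem alternatingGroup_le_gateGroup (hn : 4 ≤ n) : alternatingGroup (Bvec n) ≤ gateGroup n :=
  Perm.alternatingGroup_le_of_swap_mul_swap_mem fun a b c d hab hcd => by
    obtain ⟨j₀⟩ : Nonempty (Fin n) := ⟨⟨0, by omega⟩⟩
    simpa [mul_assoc] using mul_mem (swap_mul_swap_mem_gateGroup hn j₀ hab)
      (inv_mem (swap_mul_swap_mem_gateGroup hn j₀ hcd))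

end BaseCoset

section Circuits

variable {n : ℕ}

theorem Circuit.eval_append (S T : Circuit n) : Circuit.eval (S ++ T) = T.eval ∘ S.eval :=
  funext fun _ => List.foldl_append ..

theorem exists_mem_gateGroup_coe_eq_eval (S : Circuit n) :
    ∃ σ ∈ gateGroup n, ⇑σ = S.eval := by
  induction S with
  | nil => exact ⟨1, one_mem _, rfl⟩
  | cons g S ih =>
    obtain ⟨σ, hσ, hσS⟩ := ih
    refine ⟨σ * controlledNot g.target g.control,
      mul_mem hσ (controlledNot_control_mem_gateGroup g), ?_⟩
    rw [Perm.coe_mul, hσS, ← g.apply_eq]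
    rfl

theorem exists_circuit_eval_eq {σ : Perm (Bvec n)} (hσ : σ ∈ gateGroup n) :
    ∃ S : Circuit n, S.eval = ⇑σ := by
  induction hσ using Subgroup.closure_induction'' with
  | mem σ hσ =>
    obtain ⟨g, hg⟩ := hσ
    exact ⟨[g], hg.symm⟩
  | inv_mem σ hσ =>
    obtain ⟨g, hg⟩ := hσ
    refine ⟨[g], ?_⟩
    rw [show σ = controlledNot g.target g.control from DFunLike.coe_injective (hg.trans g.apply_eq),
      controlledNot_inv, ← g.apply_eq]
    rfl
  | one => exact ⟨[], rfl⟩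
  | mul σ τ _ _ hσ hτ =>
    obtain ⟨S, hS⟩ := hσ
    obtain ⟨T, hT⟩ := hτ
    exact ⟨T ++ S, by rw [Circuit.eval_append, hS, hT, Perm.coe_mul]⟩

theorem fSet0_eq_setOf_mem_gateGroup (n : ℕ) :
    FSet0 n = {f | ∃ σ ∈ gateGroup n, ⇑σ = f} := by
  ext f
  constructor
  · rintro ⟨S, hS⟩
    obtain ⟨σ, hσ, hσS⟩ := exists_mem_gateGroup_coe_eq_eval S
    exact ⟨σ, hσ, hσS.trans (funext hS)⟩
  · rintro ⟨σ, hσ, rfl⟩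
    obtain ⟨S, hS⟩ := exists_circuit_eval_eq hσ
    exact ⟨S, congrFun hS⟩

end Circuits

/-- For `n > 3`, `F(n,0)` is exactly the set of even permutations of `Z₂ⁿ`;
equivalently, the subgroup generated by the gates of `Ω²_n` is the alternating
group on `Z₂ⁿ`. -/
theorem fset0_eq_even_perms (n : ℕ) (hn : 3 < n) :
    FSet0 n = {f | ∃ σ : Equiv.Perm (Bvec n), ⇑σ = f ∧ Equiv.Perm.sign σ = 1} ∧
    Subgroup.closure {σ : Equiv.Perm (Bvec n) | ∃ g : RGate n, ⇑σ = g.apply} =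
      alternatingGroup (Bvec n) := by
  have hG : gateGroup n = alternatingGroup (Bvec n) :=
    le_antisymm (gateGroup_le_alternatingGroup hn) (alternatingGroup_le_gateGroup hn)
  refine ⟨?_, hG⟩
  rw [fSet0_eq_setOf_mem_gateGroup, hG]
  simp only [Perm.mem_alternatingGroup, and_comm]
end

section
/- For all integers n ≥ 1 and q ≥ n, every map f: Z₂ⁿ → Z₂ⁿ is realizable by some reversible circuit with n+q wires using q additional inputs; that is, F(n,q) is the set of all maps Z₂ⁿ → Z₂ⁿ. -/
/-! A circuit is described by the increment it adds to its input: `C.Adds F` means that `C` maps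
`v` to `v + F v`. The answer is written onto the additional wires `n, …, 2n - 1`: wire `n + j`
receives `∑ₐ f(a)ⱼ · [x = a]`, and the indicator `[x = a] = ∏ᵢ (xᵢ + aᵢ + 1)` is a monomial in
the inputs conjugated by NOT gates. A monomial in `k ≥ 3` variables is added to a wire `t` using
`k - 2` further wires of arbitrary content, which are restored: if `A` adds `P` to wire `d` and
`T` is the Toffoli gate `(i, d; t)`, then `A T A T` adds `xᵢ · P` to `t`. For `q ≥ n` the other
`n - 1` answer wires provide enough such wires. -/

theorem update_add_eq_add_single_s14 {ι M : Type*} [DecidableEq ι] [AddZeroClass M] (x : ι → M)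
    (j : ι) (a : M) : Function.update x j (x j + a) = x + Pi.single j a := by
  ext w
  rcases eq_or_ne w j with rfl | h <;> simp [*]

theorem prod_add_single_of_notMem {ι R : Type*} [DecidableEq ι] [CommSemiring R] {s : Finset ι}
    {d : ι} (hd : d ∉ s) (v : ι → R) (z : R) :
    ∏ i ∈ s, (v + Pi.single d z : ι → R) i = ∏ i ∈ s, v i :=
  Finset.prod_congr rfl fun i hi => by simp [show i ≠ d from fun h => hd (h ▸ hi)]

theorem zmod_two_eq_zero_or_one : ∀ b : ZMod 2, b = 0 ∨ b = 1 := by decide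

namespace Circuit

variable {m : ℕ}

theorem eval_append_s14 (S T : Circuit m) (v : Bvec m) : (S ++ T).eval v = T.eval (S.eval v) :=
  List.foldl_append

def Adds (C : Circuit m) (F : Bvec m → Bvec m) : Prop :=
  ∀ v, C.eval v = v + F v

theorem adds_nil : Adds ([] : Circuit m) fun _ => 0 :=
  fun v => (add_zero v).symm

theorem adds_not (j : Fin m) : Adds [RGate.NOT j] fun _ => Pi.single j 1 :=
  fun x => update_add_eq_add_single_s14 x j 1

theorem adds_cnot (i j : Fin m) (h : i ≠ j) : Adds [RGate.CNOT i j h] fun v => Pi.single j (v i) :=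
  fun x => update_add_eq_add_single_s14 x j (x i)

theorem exists_adds_toffoli {i j t : Fin m} (hij : i ≠ j) (hit : i ≠ t) (hjt : j ≠ t) :
    ∃ C : Circuit m, C.Adds fun v => Pi.single t (v i * v j) :=
  ⟨[RGate.TOF s(i, j) t (by simpa using hij) (by simp [hit.symm, hjt.symm])],
    fun x => update_add_eq_add_single_s14 x t (x i * x j)⟩

theorem Adds.append {C D : Circuit m} {F G : Bvec m → Bvec m} (hC : C.Adds F) (hD : D.Adds G) :
    (C ++ D).Adds fun v => F v + G (v + F v) := by
  intro v
  rw [eval_append_s14, hC, hD, add_assoc]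

theorem Adds.conj {C D : Circuit m} {c : Bvec m} {G : Bvec m → Bvec m}
    (hC : C.Adds fun _ => c) (hD : D.Adds G) : (C ++ D ++ C).Adds fun v => G (v + c) := by
  intro v
  rw [(hC.append hD).append hC v]
  ext w
  simp only [Pi.add_apply]
  linear_combination CharTwo.add_self_eq_zero (c w)

theorem Adds.toffoli_sandwich {A T : Circuit m} {P : Bvec m → ZMod 2} {i d t : Fin m}
    (hid : i ≠ d) (hit : i ≠ t) (hdt : d ≠ t)
    (hA : A.Adds fun v => Pi.single d (P v)) (hT : T.Adds fun v => Pi.single t (v i * v d))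
    (hPd : ∀ v z, P (v + Pi.single d z) = P v) (hPt : ∀ v z, P (v + Pi.single t z) = P v) :
    (A ++ T ++ A ++ T).Adds fun v => Pi.single t (v i * P v) := by
  intro v
  rw [eval_append_s14, eval_append_s14, eval_append_s14, hA, hT, hA, hT]
  simp only [hPd, hPt, Pi.add_apply, Pi.single_eq_same,
    Pi.single_eq_of_ne hid, Pi.single_eq_of_ne hit, Pi.single_eq_of_ne hdt, add_zero]
  ext w
  simp only [Pi.add_apply, Pi.single_apply]
  split_ifs <;> ring_nf <;> reduce_mod_char

theorem exists_adds_sum {ι : Type*} (s : Finset ι) (F : ι → Bvec m → Bvec m)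
    (hF : ∀ i ∈ s, ∃ C : Circuit m, C.Adds (F i))
    (hsep : ∀ i ∈ s, ∀ j ∈ s, ∀ v, F j (v + F i v) = F j v) :
    ∃ C : Circuit m, C.Adds fun v => ∑ i ∈ s, F i v := by
  classical
  induction s using Finset.induction_on with
  | empty => exact ⟨[], adds_nil⟩
  | insert i s hi ih =>
    obtain ⟨C, hC⟩ := hF i (Finset.mem_insert_self i s)
    obtain ⟨D, hD⟩ := ih (fun j hj => hF j (Finset.mem_insert_of_mem hj))
      (fun j hj k hk => hsep j (Finset.mem_insert_of_mem hj) k (Finset.mem_insert_of_mem hk))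
    refine ⟨C ++ D, fun v => ?_⟩
    have hs : ∑ j ∈ s, F j (v + F i v) = ∑ j ∈ s, F j v := Finset.sum_congr rfl fun j hj =>
      hsep i (Finset.mem_insert_self i s) j (Finset.mem_insert_of_mem hj) v
    simp only [(hC.append hD) v, Finset.sum_insert hi, hs]

theorem exists_adds_const (c : Bvec m) : ∃ C : Circuit m, C.Adds fun _ => c := by
  have hc : ∀ j ∈ Finset.univ, ∃ C : Circuit m, C.Adds fun _ => Pi.single j (c j) := by
    intro j _
    rcases zmod_two_eq_zero_or_one (c j) with h | h <;> rw [h]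
    · exact ⟨[], by simpa using adds_nil⟩
    · exact ⟨_, adds_not j⟩
  simpa [Finset.univ_sum_single] using exists_adds_sum Finset.univ _ hc (fun _ _ _ _ _ => rfl)

theorem exists_adds_single_mul {t : Fin m} {g : Bvec m → ZMod 2} (b : ZMod 2)
    (h : ∃ C : Circuit m, C.Adds fun v => Pi.single t (g v)) :
    ∃ C : Circuit m, C.Adds fun v => Pi.single t (b * g v) := by
  rcases zmod_two_eq_zero_or_one b with rfl | rfl
  · simpa using ⟨[], adds_nil⟩
  · simpa using h

theorem exists_adds_prod {s D : Finset (Fin m)} {t : Fin m} (hts : t ∉ s) (htD : t ∉ D)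
    (hsD : Disjoint s D) (hcard : s.card ≤ D.card + 2) :
    ∃ C : Circuit m, C.Adds fun v => Pi.single t (∏ i ∈ s, v i) := by
  induction s using Finset.induction_on generalizing t D with
  | empty => simpa using ⟨_, adds_not t⟩
  | insert i s his ih =>
    have hit : i ≠ t := fun h => hts (h ▸ Finset.mem_insert_self i s)
    simp only [Finset.prod_insert his]
    obtain hs | hs | hs : s.card = 0 ∨ s.card = 1 ∨ 2 ≤ s.card := by omega
    · obtain rfl := Finset.card_eq_zero.mp hs
      simpa using ⟨_, adds_cnot i t hit⟩
    · obtain ⟨j, rfl⟩ := Finset.card_eq_one.mp hs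
      simp only [Finset.prod_singleton]
      exact exists_adds_toffoli (by simpa using his) hit fun h => hts (by simp [h])
    · rw [Finset.card_insert_of_notMem his] at hcard
      obtain ⟨d, hd⟩ : D.Nonempty := Finset.card_pos.mp (by omega)
      have hid : i ≠ d := fun h => Finset.disjoint_left.mp hsD (Finset.mem_insert_self i s) (h ▸ hd)
      have hds : d ∉ s := fun h => Finset.disjoint_left.mp hsD (Finset.mem_insert_of_mem h) hd
      have hdt : d ≠ t := fun h => htD (h ▸ hd)
      obtain ⟨A, hA⟩ := ih (D := D.erase d) hds (Finset.notMem_erase d D)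
        ((Finset.disjoint_insert_left.mp hsD).2.mono_right (Finset.erase_subset d D))
        (by rw [Finset.card_erase_of_mem hd]; omega)
      obtain ⟨T, hT⟩ := exists_adds_toffoli hid hit hdt
      exact ⟨_, hA.toffoli_sandwich hid hit hdt hT (prod_add_single_of_notMem hds)
        (prod_add_single_of_notMem fun h => hts (Finset.mem_insert_of_mem h))⟩

end Circuit

open Circuit

variable {n q : ℕ}

def outputWire (hq : n ≤ q) : Fin n ↪ Fin (n + q) :=
  (Fin.castLEEmb hq).trans (Fin.natAddEmb n)

def minterm (a : Bvec n) (v : Bvec (n + q)) : ZMod 2 :=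
  ∏ i, (v (Fin.castAdd q i) + a i + 1)

theorem minterm_extendInput (a x : Bvec n) :
    minterm a (extendInput n q x) = if x = a then 1 else 0 := by
  have hlit : ∀ b c : ZMod 2, b + c + 1 = if b = c then 1 else 0 := by decide
  simp [minterm, extendInput, hlit, Fintype.prod_boole, funext_iff]

theorem minterm_add_single_outputWire (hq : n ≤ q) (a : Bvec n) (v : Bvec (n + q)) (j : Fin n)
    (z : ZMod 2) : minterm a (v + Pi.single (outputWire hq j) z) = minterm a v := by
  have hne : ∀ i, Fin.castAdd q i ≠ outputWire hq j := fun i h => by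
    simp [outputWire, Fin.ext_iff] at h; omega
  simp [minterm, hne]

theorem extendInput_outputWire (hq : n ≤ q) (x : Bvec n) (j : Fin n) :
    extendInput n q x (outputWire hq j) = 0 := by
  simp [extendInput, outputWire]

theorem exists_adds_minterm (hq : n ≤ q) (a : Bvec n) (j : Fin n) :
    ∃ C : Circuit (n + q), C.Adds fun v => Pi.single (outputWire hq j) (minterm a v) := by
  set t := outputWire hq j
  have hts : t ∉ Finset.univ.map (Fin.castAddEmb q) := by
    simp [t, outputWire, Fin.ext_iff]; omega
  obtain ⟨N, hN⟩ := exists_adds_const (extendInput n q (a + 1))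
  obtain ⟨C, hC⟩ := exists_adds_prod hts (Finset.notMem_erase t (Finset.univ.map (outputWire hq)))
    (Finset.disjoint_left.mpr fun w hw hw' => by
      obtain ⟨i, -, rfl⟩ := Finset.mem_map.mp hw
      obtain ⟨k, -, hk⟩ := Finset.mem_map.mp (Finset.mem_of_mem_erase hw')
      simp [outputWire, Fin.ext_iff] at hk; omega)
    (by rw [Finset.card_erase_of_mem (by simp [t])]; simp; omega)
  refine ⟨_, fun v => (hN.conj hC v).trans ?_⟩
  simp [minterm, extendInput, Finset.prod_map, add_assoc]

theorem exists_realizes (hq : n ≤ q) (f : Bvec n → Bvec n) :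
    ∃ S : Circuit (n + q), Realizes n q S f := by
  obtain ⟨S, hS⟩ := exists_adds_sum (Finset.univ : Finset (Bvec n × Fin n))
    (fun p v => Pi.single (outputWire hq p.2) (f p.1 p.2 * minterm p.1 v))
    (fun p _ => exists_adds_single_mul _ (exists_adds_minterm hq p.1 p.2))
    (fun p _ p' _ v => by simp only [minterm_add_single_outputWire])
  refine ⟨S, outputWire hq, (outputWire hq).injective, fun x j => ?_⟩
  simp [hS _, extendInput_outputWire, Finset.sum_apply, Pi.single_apply, minterm_extendInput,
    Fintype.sum_prod_type]

theorem fset_eq_univ_general (n q : ℕ) (hq : n ≤ q) :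
    (∀ f : Bvec n → Bvec n, ∃ S : Circuit (n + q), Realizes n q S f) ∧
    FSet n q = Set.univ :=
  ⟨exists_realizes hq, Set.eq_univ_of_forall (exists_realizes hq)⟩

/-- For `q ≥ n` every map `Z₂ⁿ → Z₂ⁿ` is realizable: `F(n,q)` is the set of all maps. -/
theorem fset_eq_univ (n q : ℕ) (hn : 1 ≤ n) (hq : n ≤ q) :
    (∀ f : Bvec n → Bvec n, ∃ S : Circuit (n + q), Realizes n q S f) ∧
    FSet n q = Set.univ :=
  fset_eq_univ_general n q hq
end
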